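/- Degradation is preserved by both Arıkan channel transforms: if Q ≼ W, then Q⊞Q ≼ W⊞W and Q⊛Q ≼ W⊛W, where (W⊞W)(y₁,y₂|u₁) = (1/2)Σ_{u₂} W(y₁|u₁⊕u₂)W(y₂|u₂) and (W⊛W)(y₁,y₂,u₁|u₂) = (1/2)W(y₁|u₁⊕u₂)W(y₂|u₂). -/

import Mathlib

open scoped BigOperators

/-- `P : A → B → ℝ` is a channel: nonnegative entries, rows sum to 1. -/
def IsChannel {A B : Type*} [Fintype B] (P : A → B → ℝ) : Prop :=
  (∀ a b, 0 ≤ P a b) ∧ ∀ a, ∑ b, P a b = 1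

/-- `Q` is degraded with respect to `W`. -/
def DegradedWrt {A B : Type*} [Fintype A] [Fintype B]
    (Q : Bool → B → ℝ) (W : Bool → A → ℝ) : Prop :=
  ∃ P : A → B → ℝ, IsChannel P ∧ ∀ x b, Q x b = ∑ a, W x a * P a b

/-- Arıkan "minus" transform `W ⊞ W`. -/
noncomputable def minusTransform {Y : Type*} (W : Bool → Y → ℝ) : Bool → Y × Y → ℝ :=
  fun u₁ p => (1 / 2) * ∑ u₂ : Bool, W (xor u₁ u₂) p.1 * W u₂ p.2

/-- Arıkan "plus" transform `W ⊛ W`. -/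
noncomputable def plusTransform {Y : Type*} (W : Bool → Y → ℝ) : Bool → (Y × Y) × Bool → ℝ :=
  fun u₂ t => (1 / 2) * W (xor t.2 u₂) t.1.1 * W u₂ t.1.2


/-!
Write channels as row-stochastic matrices, so that `Q ≼ W` says `Q = W * P` with `P`
stochastic. Both transforms have the form `W ↦ M * (W ⊗ₖ W)` (for `⊛`, `W ↦ M * (W ⊗ₖ W ⊗ₖ 1)`)
with a matrix `M` independent of `W`. By the mixed-product property of the Kronecker product,
`Q = W * P` gives `M * (Q ⊗ₖ Q) = M * (W ⊗ₖ W) * (P ⊗ₖ P)`, and `P ⊗ₖ P` is again stochastic.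
-/

open Matrix Kronecker

section Channel

variable {A B A' B' : Type*} [Fintype B] [Fintype B']

theorem IsChannel.kronecker {P : Matrix A B ℝ} {P' : Matrix A' B' ℝ}
    (hP : IsChannel P) (hP' : IsChannel P') : IsChannel (P ⊗ₖ P') := by
  refine ⟨fun a b => mul_nonneg (hP.1 _ _) (hP'.1 _ _), fun ⟨a, a'⟩ => ?_⟩
  rw [Fintype.sum_prod_type]
  simp only [kronecker_apply]
  rw [← Fintype.sum_mul_sum, hP.2, hP'.2, one_mul]

theorem isChannel_one [DecidableEq B] : IsChannel (1 : Matrix B B ℝ) :=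
  ⟨fun a b => by rw [one_apply]; split_ifs <;> norm_num,
    fun a => by simp [one_apply]⟩

theorem degradedWrt_of_eq_mul [Fintype A] {Q : Bool → B → ℝ} {W : Bool → A → ℝ}
    {P : Matrix A B ℝ} (hP : IsChannel P) (h : of Q = of W * P) : DegradedWrt Q W :=
  ⟨P, hP, fun x b => congrFun₂ h x b⟩

end Channel

/-- `⊞` feeds `W ⊗ W` the input `(u₁ ⊕ u₂, u₂)` with `u₂` uniform. -/
noncomputable def minusMixing : Matrix Bool (Bool × Bool) ℝ :=
  of fun u₁ v => if v.1 = xor u₁ v.2 then 1 / 2 else 0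

/-- `⊛` feeds `W ⊗ W` the input `(u₁ ⊕ u₂, u₂)` and outputs the uniform bit `u₁`, which the
factor `⊗ₖ 1` then passes through. -/
noncomputable def plusMixing : Matrix Bool ((Bool × Bool) × Bool) ℝ :=
  of fun u₂ v => if v.1 = (xor v.2 u₂, u₂) then 1 / 2 else 0

theorem of_minusTransform {Y : Type*} [Fintype Y] (W : Bool → Y → ℝ) :
    of (minusTransform W) = minusMixing * (of W ⊗ₖ of W) := by
  ext u₁ ⟨y₁, y₂⟩
  cases u₁ <;> simp [minusTransform, minusMixing, mul_apply, Fintype.sum_prod_type] <;> ring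

theorem of_plusTransform {Y : Type*} [Fintype Y] (W : Bool → Y → ℝ) :
    of (plusTransform W) = plusMixing * (of W ⊗ₖ of W ⊗ₖ (1 : Matrix Bool Bool ℝ)) := by
  ext u₂ ⟨⟨y₁, y₂⟩, u₁⟩
  cases u₂ <;> cases u₁ <;>
    simp [plusTransform, plusMixing, mul_apply, Fintype.sum_prod_type, mul_assoc]

theorem degraded_preserved_by_transforms {Y Z : Type*} [Fintype Y] [Fintype Z]
    (W : Bool → Y → ℝ) (Q : Bool → Z → ℝ) (hdeg : DegradedWrt Q W) :
    DegradedWrt (minusTransform Q) (minusTransform W) ∧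
    DegradedWrt (plusTransform Q) (plusTransform W) := by
  obtain ⟨P, hP, hQ⟩ := hdeg
  have hQW : of Q = of W * of P := by ext x z; exact hQ x z
  constructor
  · refine degradedWrt_of_eq_mul (P := of P ⊗ₖ of P) (hP.kronecker hP) ?_
    rw [of_minusTransform, of_minusTransform, hQW, mul_kronecker_mul, Matrix.mul_assoc]
  · refine degradedWrt_of_eq_mul (P := of P ⊗ₖ of P ⊗ₖ (1 : Matrix Bool Bool ℝ))
      ((hP.kronecker hP).kronecker isChannel_one) ?_
    rw [of_plusTransform, of_plusTransform, hQW, mul_kronecker_mul,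
      ← Matrix.mul_one (1 : Matrix Bool Bool ℝ), mul_kronecker_mul, Matrix.mul_one,
      Matrix.mul_assoc]
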